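/- arXiv:2110.10143 — 3 statements merged into one kernel-verified Lean document; each statement's English description precedes it below -/
import Mathlib

section
/- Let G be a connected threshold graph on n vertices with creation sequence (b_1,...,b_n). Then q(G) = 2 if and only if there exists a matrix A ∈ S(G) such that the submatrix of A whose rows are indexed by the dominating vertices of G (those indices j with b_j = 1) and whose columns are indexed by the isolated vertices of G (those indices j with b_j = 0) has pairwise orthogonal columns. -/
open Matrix BigOperators

/-- The threshold graph on `Fin n` given by a creation sequence `b`:
for `i < j`, vertices `i` and `j` are adjacent iff `b j = true`. -/
def ThresholdGraph {n : ℕ} (b : Fin n → Bool) : SimpleGraph (Fin n) where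
  Adj i j := i ≠ j ∧ ((i < j ∧ b j = true) ∨ (j < i ∧ b i = true))
  symm := ⟨fun _ _ h => ⟨h.1.symm, h.2.symm⟩⟩
  loopless := ⟨fun _ h => h.1 rfl⟩

/-- The threshold graph whose creation sequence is given by a list of booleans. -/
def thresholdOfList (L : List Bool) : SimpleGraph (Fin L.length) where
  Adj i j := i ≠ j ∧ ((i < j ∧ L.get j = true) ∨ (j < i ∧ L.get i = true))
  symm := ⟨fun _ _ h => ⟨h.1.symm, h.2.symm⟩⟩
  loopless := ⟨fun _ h => h.1 rfl⟩

/-- `S(G)`: real symmetric matrices whose off-diagonal nonzero pattern is given by `G`. -/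
def SMat {n : ℕ} (G : SimpleGraph (Fin n)) : Set (Matrix (Fin n) (Fin n) ℝ) :=
  {A | A.IsSymm ∧ ∀ i j : Fin n, i ≠ j → (A i j ≠ 0 ↔ G.Adj i j)}

/-- The number of distinct (real) eigenvalues of a matrix. -/
noncomputable def numEig {n : ℕ} (A : Matrix (Fin n) (Fin n) ℝ) : ℕ :=
  (spectrum ℝ A).ncard

/-- `q(G)`: the minimum number of distinct eigenvalues over matrices in `S(G)`. -/
noncomputable def qGraph {n : ℕ} (G : SimpleGraph (Fin n)) : ℕ :=
  sInf (numEig '' SMat G)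

/-!
If `A ∈ S(G)` has exactly two eigenvalues `λ, μ`, then `(A - λ)(A - μ) = 0`, so `(A²)ᵤᵥ = 0`
for distinct isolated vertices `u, v` (which are not adjacent); this entry is the inner product
of columns `u` and `v` of the dominating-by-isolated block.

Conversely, let `x̂ᵤ` be the normalised (pairwise orthogonal) columns of that block. The vectors
`qᵤ = cos φᵤ eᵤ + sin φᵤ x̂ᵤ`, `u` isolated, are orthonormal, so `M = 2 ∑ qᵤ qᵤᵀ - 1` is a
symmetric involution, whose spectrum is `{1, -1}`. Its entries between isolated vertices vanish,
those between a dominating and an isolated vertex are nonzero multiples of those of `A`, and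
those between dominating vertices `i, j` are `∑ᵤ sin² φᵤ x̂ᵤ(i) x̂ᵤ(j)`. The first vertex is
isolated and adjacent to every dominating vertex, so a generic choice of its angle makes all of
these nonzero, and `M ∈ S(G)`.
-/
open Finset Polynomial

theorem spectrum_subset_of_mul_self_eq_one {𝕜 A : Type*} [Field 𝕜] [Ring A] [Algebra 𝕜 A]
    {a : A} (ha : a * a = 1) : spectrum 𝕜 a ⊆ {1, -1} := by
  rcases subsingleton_or_nontrivial A with _ | _
  · simp [spectrum.of_subsingleton]
  intro x hx
  have hx2 := spectrum.subset_polynomial_aeval a (X ^ 2) ⟨x, hx, rfl⟩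
  simp only [eval_pow, eval_X, map_pow, aeval_X] at hx2
  rwa [sq, sq, ha, spectrum.one_eq, Set.mem_singleton_iff, mul_self_eq_one_iff] at hx2

section SelfAdjoint

variable {A : Type*} [Ring A] [StarRing A] [Algebra ℝ A] [TopologicalSpace A]
  [ContinuousFunctionalCalculus ℝ A IsSelfAdjoint] {a : A}

theorem IsSelfAdjoint.aeval_eq_zero_of_forall_mem_spectrum (ha : IsSelfAdjoint a) {p : ℝ[X]}
    (hp : ∀ x ∈ spectrum ℝ a, p.eval x = 0) : aeval a p = 0 := by
  rw [← cfc_polynomial p a, cfc_congr (g := 0) hp, cfc_zero]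

theorem IsSelfAdjoint.eq_algebraMap_of_spectrum_subset_singleton (ha : IsSelfAdjoint a) {c : ℝ}
    (hc : spectrum ℝ a ⊆ {c}) : a = algebraMap ℝ A c := by
  have := ha.aeval_eq_zero_of_forall_mem_spectrum (p := X - C c) fun x hx => by
    simp [Set.mem_singleton_iff.mp (hc hx)]
  simpa [sub_eq_zero] using this

theorem IsSelfAdjoint.sub_mul_sub_eq_zero_of_spectrum_subset_pair (ha : IsSelfAdjoint a)
    {c d : ℝ} (hcd : spectrum ℝ a ⊆ {c, d}) :
    (a - algebraMap ℝ A c) * (a - algebraMap ℝ A d) = 0 := by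
  have := ha.aeval_eq_zero_of_forall_mem_spectrum (p := (X - C c) * (X - C d))
    fun x hx => by rcases hcd hx with rfl | rfl <;> simp
  rwa [map_mul, map_sub, map_sub, aeval_X, aeval_C, aeval_C] at this

end SelfAdjoint

theorem exists_mem_Ioo_forall_add_mul_ne_zero {ι : Type*} [Fintype ι] {α β : ℝ} (hαβ : α < β)
    (a c : ι → ℝ) : ∃ τ ∈ Set.Ioo α β, ∀ k, a k ≠ 0 → c k + τ * a k ≠ 0 := by
  obtain ⟨τ, hτ, hroot⟩ := (Set.Ioo_infinite hαβ).exists_notMem_finset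
    (univ.image fun k => -c k / a k)
  refine ⟨τ, hτ, fun k hk h => hroot (mem_image.mpr ⟨k, mem_univ k, ?_⟩)⟩
  field_simp
  linarith

namespace SMat

variable {n : ℕ} {G : SimpleGraph (Fin n)} {A : Matrix (Fin n) (Fin n) ℝ} {i j : Fin n}

theorem isSelfAdjoint (hA : A ∈ SMat G) : IsSelfAdjoint A :=
  (isHermitian_iff_isSymm.mpr hA.1).isSelfAdjoint

theorem apply_ne_zero (hA : A ∈ SMat G) (hadj : G.Adj i j) : A i j ≠ 0 :=
  (hA.2 i j hadj.ne).mpr hadj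

theorem apply_eq_zero (hA : A ∈ SMat G) (hij : i ≠ j) (hadj : ¬G.Adj i j) : A i j = 0 :=
  not_not.mp fun h => hadj ((hA.2 i j hij).mp h)

theorem two_le_numEig (hA : A ∈ SMat G) (hadj : G.Adj i j) : 2 ≤ numEig A := by
  by_contra! hlt
  have : Finite (spectrum ℝ A) := A.finite_real_spectrum
  obtain ⟨c, hc⟩ : ∃ c, spectrum ℝ A ⊆ {c} := by
    rcases (Set.ncard_le_one_iff_subsingleton.mp (Nat.le_of_lt_succ hlt)).eq_empty_or_singleton
      with h | ⟨c, h⟩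
    · exact ⟨0, h ▸ Set.empty_subset _⟩
    · exact ⟨c, h.le⟩
  have hAc := (isSelfAdjoint hA).eq_algebraMap_of_spectrum_subset_singleton hc
  exact apply_ne_zero hA hadj (by simp [hAc, algebraMap_matrix_apply, hadj.ne])

theorem mul_self_apply_eq_zero (hA : A ∈ SMat G) (h2 : numEig A = 2) (hij : i ≠ j)
    (hadj : ¬G.Adj i j) : (A * A) i j = 0 := by
  obtain ⟨c, d, -, hcd⟩ := Set.ncard_eq_two.mp h2
  have := congrFun₂ ((isSelfAdjoint hA).sub_mul_sub_eq_zero_of_spectrum_subset_pair hcd.le) i j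
  simpa [sub_mul, mul_sub, Algebra.algebraMap_eq_smul_one, apply_eq_zero hA hij hadj, hij]
    using this

end SMat

theorem exists_mem_sMat_numEig_eq_of_qGraph_eq {n k : ℕ} {G : SimpleGraph (Fin n)} (hk : k ≠ 0)
    (h : qGraph G = k) : ∃ A ∈ SMat G, numEig A = k := by
  have hne : (numEig '' SMat G).Nonempty := by
    by_contra hempty
    rw [Set.not_nonempty_iff_eq_empty] at hempty
    exact hk (h ▸ (congrArg sInf hempty).trans Nat.sInf_empty)
  exact h ▸ Nat.sInf_mem hne

theorem qGraph_eq_two_of_mul_self_eq_one {n : ℕ} {G : SimpleGraph (Fin n)} {i j : Fin n}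
    (hadj : G.Adj i j) {M : Matrix (Fin n) (Fin n) ℝ} (hM : M ∈ SMat G) (hMM : M * M = 1) :
    qGraph G = 2 := by
  have hle : numEig M ≤ 2 :=
    (Set.ncard_le_ncard (spectrum_subset_of_mul_self_eq_one hMM)).trans
      (Set.ncard_pair (by norm_num)).le
  refine le_antisymm ((Nat.sInf_le (Set.mem_image_of_mem numEig hM)).trans hle)
    (le_csInf (Set.Nonempty.image numEig ⟨M, hM⟩) ?_)
  rintro - ⟨B, hB, rfl⟩
  exact SMat.two_le_numEig hB hadj

theorem sum_vecMulVec_mul_self {R ι m : Type*} [CommRing R] [Fintype m] [DecidableEq ι]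
    (s : Finset ι) (q : ι → m → R) (hq : ∀ k ∈ s, ∀ l ∈ s, q k ⬝ᵥ q l = if k = l then 1 else 0) :
    (∑ k ∈ s, vecMulVec (q k) (q k)) * ∑ k ∈ s, vecMulVec (q k) (q k) =
      ∑ k ∈ s, vecMulVec (q k) (q k) := by
  rw [sum_mul_sum]
  refine sum_congr rfl fun k hk => ?_
  simp_rw [vecMulVec_mul_vecMulVec]
  rw [sum_congr rfl fun l hl => by
    rw [hq k hk l hl, ite_smul, one_smul, zero_smul, apply_ite (vecMulVec (q k))]]
  simp [sum_ite_eq, hk]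

theorem two_smul_sub_one_mul_self {R : Type*} [Ring R] {p : R} (hp : p * p = p) :
    ((2 : ℕ) • p - 1) * ((2 : ℕ) • p - 1) = 1 := by
  simp only [sub_mul, mul_sub, two_smul, add_mul, mul_add, hp, mul_one, one_mul]
  abel

theorem exists_forall_mem_Ioo_sum_mul_ne_zero {ι κ : Type*} [Fintype κ] [DecidableEq ι]
    {s : Finset ι} {z : ι} (hz : z ∈ s) (w : κ → ι → ℝ) :
    ∃ θ : ι → ℝ, (∀ u, θ u ∈ Set.Ioo 0 1) ∧ ∀ k, w k z ≠ 0 → ∑ u ∈ s, θ u * w k u ≠ 0 := by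
  obtain ⟨τ, hτ, hroot⟩ := exists_mem_Ioo_forall_add_mul_ne_zero zero_lt_one (fun k => w k z)
    fun k => ∑ u ∈ s.erase z, 2⁻¹ * w k u
  refine ⟨fun u => if u = z then τ else 2⁻¹, fun u => ?_, fun k hk => ?_⟩
  · dsimp only
    split_ifs
    exacts [hτ, ⟨by norm_num, by norm_num⟩]
  · dsimp only
    rw [← add_sum_erase s _ hz, if_pos rfl, add_comm,
      sum_congr rfl fun u hu => by rw [if_neg (ne_of_mem_erase hu)]]
    exact hroot k hk

namespace ThresholdGraph

variable {n : ℕ} {b : Fin n → Bool} {i j u v w : Fin n}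

theorem not_adj_of_eq_false (hu : b u = false) (hv : b v = false) :
    ¬(ThresholdGraph b).Adj u v := by
  rintro ⟨-, ⟨-, h⟩ | ⟨-, h⟩⟩ <;> simp_all

theorem adj_of_eq_true (hi : b i = true) (hj : b j = true) (hij : i ≠ j) :
    (ThresholdGraph b).Adj i j :=
  ⟨hij, (lt_or_gt_of_ne hij).imp (⟨·, hj⟩) (⟨·, hi⟩)⟩

theorem adj_iff_lt (hw : b w = true) (hu : b u = false) :
    (ThresholdGraph b).Adj w u ↔ u < w := by
  refine ⟨?_, fun h => ⟨h.ne', Or.inr ⟨h, hw⟩⟩⟩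
  rintro ⟨-, ⟨-, h⟩ | ⟨h, -⟩⟩
  · simp_all
  · exact h

theorem adj_first {hn : 0 < n} (h0 : b ⟨0, hn⟩ = false) (hi : b i = true) :
    (ThresholdGraph b).Adj i ⟨0, hn⟩ := by
  have hi0 : i ≠ ⟨0, hn⟩ := by rintro rfl; simp_all
  exact (adj_iff_lt hi h0).mpr (Fin.lt_def.mpr (Nat.pos_of_ne_zero fun h => hi0 (Fin.ext h)))

theorem adj_last {hn : n - 1 < n} (hlast : b ⟨n - 1, hn⟩ = true) (hu : b u = false) :
    (ThresholdGraph b).Adj ⟨n - 1, hn⟩ u := by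
  have hul : u ≠ ⟨n - 1, hn⟩ := by rintro rfl; simp_all
  have hul' : u.val ≠ n - 1 := fun h => hul (Fin.ext h)
  exact (adj_iff_lt hlast hu).mpr (Fin.lt_def.mpr (by simp only; omega))

theorem mul_self_apply_eq_sum {A : Matrix (Fin n) (Fin n) ℝ} (hA : A ∈ SMat (ThresholdGraph b))
    (hu : b u = false) (hv : b v = false) (huv : u ≠ v) :
    (A * A) u v = ∑ w ∈ univ.filter (fun w => b w = true), A w u * A w v := by
  have hzero : ∀ w, b w = false → A w u * A w v = 0 := by
    intro w hw
    by_cases hwu : w = u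
    · rw [hwu, SMat.apply_eq_zero hA huv (not_adj_of_eq_false hu hv), mul_zero]
    · rw [SMat.apply_eq_zero hA hwu (not_adj_of_eq_false hw hu), zero_mul]
  rw [sum_filter_of_ne fun w _ hw => by simpa using mt (hzero w) hw, mul_apply]
  exact sum_congr rfl fun w _ => by rw [hA.1.apply]

end ThresholdGraph

section Construction

variable {n : ℕ} (b : Fin n → Bool) (A : Matrix (Fin n) (Fin n) ℝ) (θ : Fin n → ℝ)

def dominatingColumn (u : Fin n) : Fin n → ℝ := fun w => if b w = true then A w u else 0

/-- For `θ u = sin² φ` this is `cos φ eᵤ + sin φ x̂ᵤ`, with `x̂ᵤ` the normalised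
`dominatingColumn b A u`. -/
noncomputable def tiltedVector (u : Fin n) : Fin n → ℝ :=
  Pi.single u √(1 - θ u) +
    √(θ u / (dominatingColumn b A u ⬝ᵥ dominatingColumn b A u)) • dominatingColumn b A u

noncomputable def tiltedProjection : Matrix (Fin n) (Fin n) ℝ :=
  ∑ u ∈ univ.filter (fun u => b u = false), vecMulVec (tiltedVector b A θ u) (tiltedVector b A θ u)

variable {b A θ} {i j u v : Fin n}

theorem dominatingColumn_apply_of_false (hi : b i = false) : dominatingColumn b A u i = 0 := by
  simp [dominatingColumn, hi]

theorem dominatingColumn_dotProduct :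
    dominatingColumn b A u ⬝ᵥ dominatingColumn b A v =
      ∑ w ∈ univ.filter (fun w => b w = true), A w u * A w v := by
  rw [dotProduct, sum_filter]
  refine sum_congr rfl fun w _ => ?_
  by_cases hw : b w = true <;> simp [dominatingColumn, hw]

theorem dominatingColumn_dotProduct_self_nonneg :
    0 ≤ dominatingColumn b A u ⬝ᵥ dominatingColumn b A u :=
  sum_nonneg fun _ _ => mul_self_nonneg _

theorem tiltedVector_apply_of_false (hi : b i = false) :
    tiltedVector b A θ u i = if i = u then √(1 - θ u) else 0 := by
  simp [tiltedVector, Pi.single_apply, dominatingColumn_apply_of_false hi]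

theorem tiltedVector_apply_of_true (hi : b i = true) (hu : b u = false) :
    tiltedVector b A θ u i =
      √(θ u / (dominatingColumn b A u ⬝ᵥ dominatingColumn b A u)) * A i u := by
  have hiu : i ≠ u := by rintro rfl; simp_all
  simp [tiltedVector, hiu, dominatingColumn, hi]

theorem tiltedVector_dotProduct
    (horth : ∀ u v, b u = false → b v = false → u ≠ v →
      dominatingColumn b A u ⬝ᵥ dominatingColumn b A v = 0)
    (hN : ∀ u, b u = false → 0 < dominatingColumn b A u ⬝ᵥ dominatingColumn b A u)
    (hθ : ∀ u, θ u ∈ Set.Ioo 0 1) (hu : b u = false) (hv : b v = false) :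
    tiltedVector b A θ u ⬝ᵥ tiltedVector b A θ v = if u = v then 1 else 0 := by
  rw [tiltedVector, tiltedVector, add_dotProduct, dotProduct_add, dotProduct_add]
  simp only [smul_dotProduct, dotProduct_smul, single_dotProduct, dotProduct_single,
    Pi.smul_apply, dominatingColumn_apply_of_false hu, dominatingColumn_apply_of_false hv,
    smul_eq_mul, mul_zero, zero_mul, add_zero]
  by_cases huv : u = v
  · subst huv
    have hθu := hθ u
    rw [if_pos rfl, Pi.single_eq_same, Real.mul_self_sqrt (by linarith [hθu.2]), ← mul_assoc,
      Real.mul_self_sqrt (div_nonneg hθu.1.le (hN u hu).le), div_mul_cancel₀ _ (hN u hu).ne']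
    ring
  · rw [if_neg huv, Pi.single_eq_of_ne (Ne.symm huv), horth u v hu hv huv]
    ring

theorem tiltedProjection_mul_self
    (horth : ∀ u v, b u = false → b v = false → u ≠ v →
      dominatingColumn b A u ⬝ᵥ dominatingColumn b A v = 0)
    (hN : ∀ u, b u = false → 0 < dominatingColumn b A u ⬝ᵥ dominatingColumn b A u)
    (hθ : ∀ u, θ u ∈ Set.Ioo 0 1) :
    tiltedProjection b A θ * tiltedProjection b A θ = tiltedProjection b A θ :=
  sum_vecMulVec_mul_self _ _ fun _ hu _ hv =>
    tiltedVector_dotProduct horth hN hθ (mem_filter.mp hu).2 (mem_filter.mp hv).2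

theorem tiltedProjection_isSymm : (tiltedProjection b A θ).IsSymm := by
  simp [tiltedProjection, IsSymm, transpose_sum, transpose_vecMulVec]

theorem tiltedProjection_apply :
    tiltedProjection b A θ i j =
      ∑ u ∈ univ.filter (fun u => b u = false),
        tiltedVector b A θ u i * tiltedVector b A θ u j := by
  simp [tiltedProjection, Matrix.sum_apply, vecMulVec_apply]

theorem tiltedProjection_apply_of_false_of_false (hi : b i = false) (hj : b j = false)
    (hij : i ≠ j) : tiltedProjection b A θ i j = 0 := by
  rw [tiltedProjection_apply]
  refine sum_eq_zero fun u _ => ?_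
  rw [tiltedVector_apply_of_false hi, tiltedVector_apply_of_false hj]
  split_ifs with hiu hju <;> simp_all

theorem tiltedProjection_apply_of_true_of_false (hi : b i = true) (hj : b j = false) :
    tiltedProjection b A θ i j =
      √(θ j / (dominatingColumn b A j ⬝ᵥ dominatingColumn b A j)) * A i j * √(1 - θ j) := by
  rw [tiltedProjection_apply, sum_congr rfl fun u hu => by
    rw [tiltedVector_apply_of_true hi (mem_filter.mp hu).2, tiltedVector_apply_of_false hj,
      mul_ite, mul_zero]]
  simp [hj]

theorem tiltedProjection_apply_of_true_of_true (hθ : ∀ u, θ u ∈ Set.Ioo 0 1) (hi : b i = true)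
    (hj : b j = true) :
    tiltedProjection b A θ i j = ∑ u ∈ univ.filter (fun u => b u = false),
      θ u * (A i u * A j u / (dominatingColumn b A u ⬝ᵥ dominatingColumn b A u)) := by
  rw [tiltedProjection_apply]
  refine sum_congr rfl fun u hu => ?_
  have hu := (mem_filter.mp hu).2
  rw [tiltedVector_apply_of_true hi hu, tiltedVector_apply_of_true hj hu, mul_mul_mul_comm,
    Real.mul_self_sqrt (div_nonneg (hθ u).1.le dominatingColumn_dotProduct_self_nonneg)]
  ring

theorem two_smul_tiltedProjection_sub_one_mem_sMat (hA : A ∈ SMat (ThresholdGraph b))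
    (hN : ∀ u, b u = false → 0 < dominatingColumn b A u ⬝ᵥ dominatingColumn b A u)
    (hθ : ∀ u, θ u ∈ Set.Ioo 0 1)
    (hgen : ∀ i j, b i = true → b j = true → i ≠ j → ∑ u ∈ univ.filter (fun u => b u = false),
      θ u * (A i u * A j u / (dominatingColumn b A u ⬝ᵥ dominatingColumn b A u)) ≠ 0) :
    (2 : ℕ) • tiltedProjection b A θ - 1 ∈ SMat (ThresholdGraph b) := by
  have hP := tiltedProjection_isSymm (b := b) (A := A) (θ := θ)
  refine ⟨by rw [IsSymm, transpose_sub, transpose_smul, transpose_one, hP.eq], fun i j hij => ?_⟩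
  have hcross : ∀ i j, b i = true → b j = false →
      (tiltedProjection b A θ i j ≠ 0 ↔ (ThresholdGraph b).Adj i j) := by
    intro i j hi hj
    have hij : i ≠ j := by rintro rfl; simp_all
    have hs : √(θ j / (dominatingColumn b A j ⬝ᵥ dominatingColumn b A j)) ≠ 0 :=
      Real.sqrt_ne_zero'.mpr (div_pos (hθ j).1 (hN j hj))
    have hc : √(1 - θ j) ≠ 0 := Real.sqrt_ne_zero'.mpr (by linarith [(hθ j).2])
    rw [tiltedProjection_apply_of_true_of_false hi hj, ← hA.2 i j hij]
    simp [hs, hc]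
  rw [show ((2 : ℕ) • tiltedProjection b A θ - 1 : Matrix (Fin n) (Fin n) ℝ) i j =
      2 * tiltedProjection b A θ i j by
    rw [Matrix.sub_apply, Matrix.smul_apply, one_apply_ne hij, sub_zero, nsmul_eq_mul,
      Nat.cast_ofNat], mul_ne_zero_iff_left two_ne_zero]
  cases hi : b i <;> cases hj : b j
  · simpa [tiltedProjection_apply_of_false_of_false hi hj hij] using
      ThresholdGraph.not_adj_of_eq_false hi hj
  · rw [← hP.apply, (ThresholdGraph b).adj_comm]
    exact hcross j i hj hi
  · exact hcross i j hi hj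
  · rw [tiltedProjection_apply_of_true_of_true hθ hi hj]
    exact iff_of_true (hgen i j hi hj hij) (ThresholdGraph.adj_of_eq_true hi hj hij)

theorem exists_mem_sMat_mul_self_eq_one {z : Fin n} (hA : A ∈ SMat (ThresholdGraph b))
    (horth : ∀ u v, b u = false → b v = false → u ≠ v →
      ∑ w ∈ univ.filter (fun w => b w = true), A w u * A w v = 0)
    (hz : b z = false) (hzadj : ∀ i, b i = true → (ThresholdGraph b).Adj i z)
    (hdeg : ∀ u, b u = false → ∃ w, (ThresholdGraph b).Adj w u) :
    ∃ M ∈ SMat (ThresholdGraph b), M * M = 1 := by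
  have hN : ∀ u, b u = false → 0 < dominatingColumn b A u ⬝ᵥ dominatingColumn b A u := by
    intro u hu
    obtain ⟨w, hw⟩ := hdeg u hu
    have hbw : b w = true := by
      by_contra h
      exact ThresholdGraph.not_adj_of_eq_false (Bool.eq_false_iff.mpr h) hu hw
    rw [dominatingColumn_dotProduct]
    exact sum_pos' (fun _ _ => mul_self_nonneg _)
      ⟨w, mem_filter.mpr ⟨mem_univ w, hbw⟩, mul_self_pos.mpr (SMat.apply_ne_zero hA hw)⟩
  obtain ⟨θ, hθ, hgen⟩ := exists_forall_mem_Ioo_sum_mul_ne_zero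
    (s := univ.filter fun u => b u = false) (mem_filter.mpr ⟨mem_univ z, hz⟩)
    fun (k : Fin n × Fin n) u =>
      A k.1 u * A k.2 u / (dominatingColumn b A u ⬝ᵥ dominatingColumn b A u)
  refine ⟨_, two_smul_tiltedProjection_sub_one_mem_sMat hA hN hθ fun i j hi hj _ => hgen (i, j) ?_,
    two_smul_sub_one_mul_self (tiltedProjection_mul_self (fun u v hu hv huv => ?_) hN hθ)⟩
  · exact div_ne_zero (mul_ne_zero (SMat.apply_ne_zero hA (hzadj i hi))
      (SMat.apply_ne_zero hA (hzadj j hj))) (hN z hz).ne'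
  · rw [dominatingColumn_dotProduct, horth u v hu hv huv]

end Construction

/-- For a connected threshold graph `G` with creation sequence `b`,
`q(G) = 2` iff some `A ∈ S(G)` has the submatrix with rows indexed by dominating
vertices and columns indexed by isolated vertices having pairwise orthogonal columns. -/
theorem stmt0 {n : ℕ} (hn : 1 ≤ n) (b : Fin n → Bool)
    (hb1 : b ⟨0, by omega⟩ = false) (hbn : b ⟨n - 1, by omega⟩ = true) :
    qGraph (ThresholdGraph b) = 2 ↔
      ∃ A ∈ SMat (ThresholdGraph b),
        ∀ u v : Fin n, b u = false → b v = false → u ≠ v →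
          ∑ w ∈ Finset.univ.filter (fun w : Fin n => b w = true), A w u * A w v = 0 := by
  constructor
  · intro hq
    obtain ⟨A, hA, hA2⟩ := exists_mem_sMat_numEig_eq_of_qGraph_eq two_ne_zero hq
    refine ⟨A, hA, fun u v hu hv huv => ?_⟩
    rw [← ThresholdGraph.mul_self_apply_eq_sum hA hu hv huv]
    exact SMat.mul_self_apply_eq_zero hA hA2 huv
      (ThresholdGraph.not_adj_of_eq_false hu hv)
  · rintro ⟨A, hA, horth⟩
    obtain ⟨M, hM, hMM⟩ := exists_mem_sMat_mul_self_eq_one hA horth hb1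
      (fun i hi => ThresholdGraph.adj_first hb1 hi) fun u hu => ⟨_, ThresholdGraph.adj_last hbn hu⟩
    exact qGraph_eq_two_of_mul_self_eq_one (ThresholdGraph.adj_last hbn hb1) hM hMM
end

section
/- Let G be the connected threshold graph on n vertices with creation sequence consisting of blocks (0^{k_1}, 1^{t_1}, 0^{k_2}, 1^{t_2}, ..., 0^{k_s}, 1^{t_s}), where s ≥ 1 and k_i ≥ 1, t_i ≥ 1 for all i. If there exists an index i with 2 ≤ i ≤ s such that k_i ≥ t_i + t_{i+1} + ... + t_s, then q(G) ≥ 3. -/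
open Matrix BigOperators

/-! If `A ∈ S(G)` has at most two distinct eigenvalues then `A² = aA + cI`, so the rows of two
distinct non-adjacent vertices are orthogonal. In the threshold graph, the first vertex together
with the `k_i` vertices of the `i`-th zero block is an independent set, and every common neighbour
of two of its vertices is one of the `t_i + ⋯ + t_s` dominating vertices added after that block.
Restricted to those columns, the `k_i + 1` rows are nonzero and pairwise orthogonal, which forces
`k_i + 1 ≤ t_i + ⋯ + t_s`. -/

open Finset

theorem List.card_filter_le_get_eq_count_drop {α : Type*} [DecidableEq α] (l : List α)
    (c : ℕ) (a : α) : #{p : Fin l.length | c ≤ p.val ∧ l.get p = a} = (l.drop c).count a := by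
  induction l generalizing c with
  | nil => simp
  | cons x l ih =>
    rw [card_filter]
    erw [Fin.sum_univ_succ]
    simp only [Fin.val_zero, Fin.val_succ, List.get_cons_zero, ← card_filter]
    cases c with
    | zero =>
      have h := ih 0
      simp only [Nat.zero_le, true_and, List.drop_zero, List.get_eq_getElem] at h
      simp [h, List.count_cons, add_comm]
    | succ c => simpa using ih c

theorem List.sum_drop_ofFn {M : Type*} [AddCancelCommMonoid M] {n : ℕ} (f : Fin n → M) (i : ℕ) :
    ((List.ofFn f).drop i).sum = ∑ j with i ≤ j.val, f j := by
  have h := congrArg List.sum (List.take_append_drop i (List.ofFn f))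
  rw [List.sum_append, List.sum_take_ofFn, List.sum_ofFn,
    ← sum_filter_add_sum_filter_not univ (fun j : Fin n => j.val < i)] at h
  simpa using add_left_cancel h

theorem Set.exists_subset_pair_of_ncard_le_two {α : Type*} [Nonempty α] {s : Set α}
    (hs : s.Finite) (h : s.ncard ≤ 2) : ∃ a b, s ⊆ {a, b} := by
  obtain h | h | h : s.ncard = 0 ∨ s.ncard = 1 ∨ s.ncard = 2 := by omega
  · obtain ⟨a⟩ := ‹Nonempty α›
    exact ⟨a, a, by simp [(Set.ncard_eq_zero hs).mp h]⟩
  · obtain ⟨a, rfl⟩ := Set.ncard_eq_one.mp h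
    exact ⟨a, a, by simp⟩
  · obtain ⟨a, b, -, rfl⟩ := Set.ncard_eq_two.mp h
    exact ⟨a, b, subset_rfl⟩

theorem Matrix.IsHermitian.exists_mul_self_eq_of_ncard_spectrum_le_two {n : ℕ}
    {A : Matrix (Fin n) (Fin n) ℝ} (hA : A.IsHermitian) (h : (spectrum ℝ A).ncard ≤ 2) :
    ∃ a c : ℝ, A * A = a • A + c • (1 : Matrix (Fin n) (Fin n) ℝ) := by
  obtain ⟨l, m, hlm⟩ := Set.exists_subset_pair_of_ncard_le_two A.finite_spectrum h
  have h0 : cfc (fun x : ℝ => (x - l) * (x - m)) A = 0 := by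
    rw [cfc_congr (g := 0) ?_, cfc_zero]
    intro x hx
    rcases hlm hx with rfl | rfl <;> simp
  rw [cfc_mul _ _ A, cfc_sub _ _ A, cfc_sub _ _ A, cfc_id' ℝ A, cfc_const l A, cfc_const m A,
    Algebra.algebraMap_eq_smul_one, Algebra.algebraMap_eq_smul_one] at h0
  refine ⟨l + m, -(l * m), ?_⟩
  rw [← sub_eq_zero, ← h0]
  simp only [sub_mul, mul_sub, smul_mul_assoc, mul_smul_comm, one_mul, mul_one]
  module

theorem adjMatrix_mem_SMat {n : ℕ} (G : SimpleGraph (Fin n)) [DecidableRel G.Adj] :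
    G.adjMatrix ℝ ∈ SMat G :=
  ⟨G.isSymm_adjMatrix, fun i j _ => by by_cases h : G.Adj i j <;> simp [h]⟩

section SMat

variable {n : ℕ} {G : SimpleGraph (Fin n)} {A : Matrix (Fin n) (Fin n) ℝ}

theorem sum_mul_eq_zero_of_not_adj (hA : A ∈ SMat G) {a c : ℝ}
    (hq : A * A = a • A + c • (1 : Matrix (Fin n) (Fin n) ℝ)) {u w : Fin n} (huw : u ≠ w)
    (hnadj : ¬ G.Adj u w) : ∑ p, A u p * A w p = 0 := by
  have hAuw : A u w = 0 := not_not.mp fun h => hnadj ((hA.2 u w huw).mp h)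
  calc ∑ p, A u p * A w p = (A * A) u w := by
        simp only [Matrix.mul_apply, ← hA.1.apply w]
    _ = 0 := by simp [hq, hAuw, Matrix.one_apply_ne huw]

theorem card_le_card_of_mul_self_eq (hA : A ∈ SMat G) {a c : ℝ}
    (hq : A * A = a • A + c • (1 : Matrix (Fin n) (Fin n) ℝ)) {S N : Finset (Fin n)}
    (hind : ∀ u ∈ S, ∀ w ∈ S, u ≠ w → ¬ G.Adj u w)
    (hcommon : ∀ u ∈ S, ∀ w ∈ S, u ≠ w → ∀ p, G.Adj u p → G.Adj w p → p ∈ N)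
    (hnbr : ∀ u ∈ S, ∃ p ∈ N, G.Adj u p) : #S ≤ #N := by
  let v : S → EuclideanSpace ℝ N := fun u => WithLp.toLp 2 fun p => A u p
  have hne : ∀ u, v u ≠ 0 := by
    intro u hu
    obtain ⟨p, hpN, hup⟩ := hnbr u u.2
    have := congrArg (· ⟨p, hpN⟩) hu
    exact (hA.2 u p (G.ne_of_adj hup)).mpr hup (by simpa [v] using this)
  have horth : ∀ u w, u ≠ w → inner ℝ (v u) (v w) = 0 := by
    intro u w huw
    have huw : (u : Fin n) ≠ w := Subtype.coe_ne_coe.mpr huw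
    have hout : ∀ p ∉ N, A u p * A w p = 0 := by
      intro p hpN
      by_contra h
      obtain ⟨hup, hwp⟩ := mul_ne_zero_iff.mp h
      by_cases hpu : p = u
      · rw [hpu] at hwp
        exact hind w w.2 u u.2 huw.symm ((hA.2 w u huw.symm).mp hwp)
      by_cases hpw : p = w
      · rw [hpw] at hup
        exact hind u u.2 w w.2 huw ((hA.2 u w huw).mp hup)
      exact hpN (hcommon u u.2 w w.2 huw p ((hA.2 u p (Ne.symm hpu)).mp hup)
        ((hA.2 w p (Ne.symm hpw)).mp hwp))
    calc inner ℝ (v u) (v w) = ∑ p ∈ N, A u p * A w p := by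
          simp [v, PiLp.inner_apply, sum_attach N fun p => A u p * A w p, mul_comm]
      _ = ∑ p, A u p * A w p := sum_subset (subset_univ N) fun p _ => hout p
      _ = 0 := sum_mul_eq_zero_of_not_adj hA hq huw (hind u u.2 w w.2 huw)
  simpa using (linearIndependent_of_ne_zero_of_inner_eq_zero hne horth).fintype_card_le_finrank

end SMat

theorem three_le_qGraph_of_card_lt {n : ℕ} {G : SimpleGraph (Fin n)} {S N : Finset (Fin n)}
    (hind : ∀ u ∈ S, ∀ w ∈ S, u ≠ w → ¬ G.Adj u w)
    (hcommon : ∀ u ∈ S, ∀ w ∈ S, u ≠ w → ∀ p, G.Adj u p → G.Adj w p → p ∈ N)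
    (hnbr : ∀ u ∈ S, ∃ p ∈ N, G.Adj u p) (hlt : #N < #S) : 3 ≤ qGraph G := by
  classical
  refine le_csInf ⟨_, Set.mem_image_of_mem _ (adjMatrix_mem_SMat G)⟩ ?_
  rintro _ ⟨A, hA, rfl⟩
  by_contra! h
  have hHerm : A.IsHermitian := by
    rw [Matrix.IsHermitian, Matrix.conjTranspose_eq_transpose_of_trivial, hA.1]
  obtain ⟨a, c, hq⟩ := hHerm.exists_mul_self_eq_of_ncard_spectrum_le_two (Nat.lt_succ_iff.mp h)
  exact hlt.not_ge (card_le_card_of_mul_self_eq hA hq hind hcommon hnbr)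

theorem ThresholdGraph.adj_iff_of_lt {n : ℕ} {b : Fin n → Bool} {i j : Fin n} (h : i < j) :
    (ThresholdGraph b).Adj i j ↔ b j = true := by
  simp [ThresholdGraph, h.ne, h, h.not_gt]

theorem thresholdOfList_eq_thresholdGraph (L : List Bool) :
    thresholdOfList L = ThresholdGraph L.get :=
  rfl

theorem three_le_qGraph_thresholdGraph {n : ℕ} (b : Fin n → Bool) {v z d : Fin n}
    (hvz : v < z) (hzd : z ≤ d) (hrun : ∀ u ∈ Ico z d, b u = false) (hd : b d = true)
    (hcard : #{p | z ≤ p ∧ b p = true} ≤ #(Ico z d)) : 3 ≤ qGraph (ThresholdGraph b) := by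
  set N : Finset (Fin n) := {p | z ≤ p ∧ b p = true}
  have hrunN : ∀ u ∈ Ico z d, ∀ p, (ThresholdGraph b).Adj u p → p ∈ N := by
    intro u hu p hup
    rcases lt_or_gt_of_ne ((ThresholdGraph b).ne_of_adj hup) with h | h
    · simpa [N] using ⟨(mem_Ico.mp hu).1.trans h.le, (ThresholdGraph.adj_iff_of_lt h).mp hup⟩
    · have := (ThresholdGraph.adj_iff_of_lt h).mp hup.symm
      simp [hrun u hu] at this
  have hmax : ∀ u ∈ insert v (Ico z d), ∀ w ∈ insert v (Ico z d), u < w → w ∈ Ico z d := by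
    intro u hu w hw huw
    rcases mem_insert.mp hw with rfl | hw
    · rcases mem_insert.mp hu with rfl | hu
      · exact absurd huw (lt_irrefl _)
      · exact absurd ((mem_Ico.mp hu).1.trans_lt huw) hvz.not_gt
    · exact hw
  refine three_le_qGraph_of_card_lt (S := insert v (Ico z d)) (N := N) ?_ ?_ ?_ ?_
  · intro u hu w hw huw hadj
    rcases lt_or_gt_of_ne huw with h | h
    · simp [hrun w (hmax u hu w hw h), ThresholdGraph.adj_iff_of_lt h] at hadj
    · simpa [hrun u (hmax w hw u hu h), ThresholdGraph.adj_iff_of_lt h] using hadj.symm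
  · intro u hu w hw huw p hup hwp
    rcases lt_or_gt_of_ne huw with h | h
    · exact hrunN w (hmax u hu w hw h) p hwp
    · exact hrunN u (hmax w hw u hu h) p hup
  · intro u hu
    have hud : u < d := by
      rcases mem_insert.mp hu with rfl | hu
      · exact hvz.trans_le hzd
      · exact (mem_Ico.mp hu).2
    exact ⟨d, by simp [N, hzd, hd], (ThresholdGraph.adj_iff_of_lt hud).mpr hd⟩
  · rw [card_insert_of_notMem fun h => hvz.not_ge (mem_Ico.mp h).1]
    omega

theorem three_le_qGraph_thresholdOfList {pre post : List Bool} {k : ℕ} (hpre : pre ≠ [])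
    (hcount : (true :: post).count true ≤ k) :
    3 ≤ qGraph (thresholdOfList (pre ++ List.replicate k false ++ true :: post)) := by
  set L := pre ++ List.replicate k false ++ true :: post
  have hlen : L.length = pre.length + k + (post.length + 1) := by simp [L]; omega
  have hpos : 0 < pre.length := List.length_pos_iff.mpr hpre
  rw [thresholdOfList_eq_thresholdGraph]
  refine three_le_qGraph_thresholdGraph L.get (v := ⟨0, by omega⟩) (z := ⟨pre.length, by omega⟩)
    (d := ⟨pre.length + k, by omega⟩) (Fin.mk_lt_mk.mpr hpos) (Fin.mk_le_mk.mpr (by omega))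
    ?_ ?_ ?_
  · intro u hu
    simp only [mem_Ico, Fin.le_def, Fin.lt_def] at hu
    simp [L, List.getElem_append, hu.1]
    omega
  · simp [L]
  · refine (List.card_filter_le_get_eq_count_drop L pre.length true).trans_le ?_
    simpa [L, Fin.card_Ico, List.count_replicate] using hcount

theorem stmt1_general (s : ℕ) (k t : Fin s → ℕ)
    (ht : ∀ i, 1 ≤ t i)
    (i : Fin s) (hi : 1 ≤ (i : ℕ))
    (hki : (∑ j ∈ Finset.Ici i, t j) ≤ k i) :
    3 ≤ qGraph (thresholdOfList ((List.ofFn (fun j : Fin s =>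
      List.replicate (k j) false ++ List.replicate (t j) true)).flatten)) := by
  set blocks := List.ofFn fun j : Fin s => List.replicate (k j) false ++ List.replicate (t j) true
  obtain ⟨r, hr⟩ : ∃ r, t i = r + 1 := Nat.exists_eq_add_of_le' (ht i)
  set post := List.replicate r true ++ (blocks.drop (i + 1)).flatten
  have hdrop : (blocks.drop i).flatten = List.replicate (k i) false ++ true :: post := by
    rw [List.drop_eq_getElem_cons (by simp [blocks]), List.flatten_cons]
    simp [blocks, hr, post, List.replicate_succ]
  have hpre : (blocks.take i).flatten ≠ [] := by
    rw [← List.length_pos_iff, List.length_flatten, List.map_take, List.map_ofFn,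
      List.sum_take_ofFn]
    have h0 : (⟨0, by omega⟩ : Fin s) ∈ ({j | j.val < i} : Finset (Fin s)) :=
      mem_filter.mpr ⟨mem_univ _, hi⟩
    refine lt_of_lt_of_le ?_ (single_le_sum (fun _ _ => Nat.zero_le _) h0)
    simpa using Nat.lt_add_left _ (ht _)
  have hcount : (true :: post).count true = ∑ j ∈ Ici i, t j := by
    have := congrArg (List.count true) hdrop
    rw [List.count_flatten, List.map_drop, List.map_ofFn, List.sum_drop_ofFn] at this
    simpa [List.count_replicate, filter_le_eq_Ici] using this.symm
  rw [← List.take_append_drop i blocks, List.flatten_append, hdrop, ← List.append_assoc]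
  exact three_le_qGraph_thresholdOfList hpre (hcount ▸ hki)

/-- For a connected threshold graph with creation sequence blocks
`(0^{k_1}, 1^{t_1}, …, 0^{k_s}, 1^{t_s})`, if `k_i ≥ t_i + ⋯ + t_s` for some `2 ≤ i ≤ s`
(here `i` is zero-indexed, so `1 ≤ i`), then `q(G) ≥ 3`. -/
theorem stmt1 (s : ℕ) (hs : 1 ≤ s) (k t : Fin s → ℕ)
    (hk : ∀ i, 1 ≤ k i) (ht : ∀ i, 1 ≤ t i)
    (i : Fin s) (hi : 1 ≤ (i : ℕ))
    (hki : (∑ j ∈ Finset.Ici i, t j) ≤ k i) :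
    3 ≤ qGraph (thresholdOfList ((List.ofFn (fun j : Fin s =>
      List.replicate (k j) false ++ List.replicate (t j) true)).flatten)) :=
  stmt1_general s k t ht i hi hki
end

section
/- Let G be the threshold graph with creation sequence (0^{k_1}, 1^{t_1}, 0^{k_2}, 1^{t_2}), where k_1, k_2, t_1, t_2 ≥ 1. Then q(G) ≤ 4. -/
open Matrix BigOperators

/-!
Write the vertex set as four blocks `V₀, V₁, V₂, V₃` of sizes `k₁, t₁, k₂, t₂`. Two vertices are
adjacent exactly when the later of their blocks is a `1`-block, so the graph is a blow-up of a
pattern on four vertices. Let `Q` be the `4 × n` matrix whose rows are the normalized indicator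
vectors of the blocks; then `Q Qᵀ = 1`, and for a symmetric `4 × 4` matrix `B` with the right zero
pattern, `Qᵀ B Q ∈ S(G)`. Since `Q (Qᵀ B Q) = B Q`, every polynomial annihilating `B` becomes,
after multiplication by `X`, one annihilating `Qᵀ B Q`. A suitable `B` with three distinct
eigenvalues therefore gives a matrix in `S(G)` with at most four.
-/

open Polynomial

theorem spectrum.ncard_le_natDegree_of_aeval_eq_zero {𝕜 A : Type*} [Field 𝕜] [Ring A]
    [Algebra 𝕜 A] {a : A} {p : 𝕜[X]} (hp : p ≠ 0) (hpa : aeval a p = 0) :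
    (spectrum 𝕜 a).ncard ≤ p.natDegree := by
  classical
  have hroots : spectrum 𝕜 a ⊆ p.roots.toFinset := by
    intro μ hμ
    have hμp := spectrum.subset_polynomial_aeval a p ⟨μ, hμ, rfl⟩
    rw [hpa] at hμp
    rcases subsingleton_or_nontrivial A with _ | _
    · simp [spectrum.of_subsingleton] at hμp
    · rw [spectrum.zero_eq, Set.mem_singleton_iff] at hμp
      simpa [hp] using hμp
  calc (spectrum 𝕜 a).ncard ≤ p.roots.toFinset.card := by
        simpa using Set.ncard_le_ncard hroots
    _ ≤ p.natDegree := (Multiset.toFinset_card_le _).trans p.card_roots'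

namespace Matrix

variable {m n : Type*} [Fintype m] [Fintype n] [DecidableEq m] [DecidableEq n]

theorem mul_aeval_eq_aeval_mul_of_mul_eq {R : Type*} [CommRing R] {Q : Matrix m n R}
    {A : Matrix n n R} {B : Matrix m m R} (h : Q * A = B * Q) (p : R[X]) :
    Q * aeval A p = aeval B p * Q := by
  induction p using Polynomial.induction_on' with
  | add p q hp hq => simp [Matrix.mul_add, Matrix.add_mul, hp, hq]
  | monomial k c =>
    have hpow : Q * A ^ k = B ^ k * Q := by
      induction k with
      | zero => simp
      | succ k ih =>
        rw [pow_succ, pow_succ, ← Matrix.mul_assoc, ih, Matrix.mul_assoc, h, Matrix.mul_assoc]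
    simp [aeval_monomial, Algebra.algebraMap_eq_smul_one, hpow]

theorem aeval_transpose_mul_mul_X_mul_eq_zero {R : Type*} [CommRing R] {Q : Matrix m n R}
    (hQ : Q * Qᵀ = 1) {B : Matrix m m R} {p : R[X]} (hp : aeval B p = 0) :
    aeval (Qᵀ * B * Q) (X * p) = 0 := by
  have hint : Q * (Qᵀ * B * Q) = B * Q := by
    rw [← Matrix.mul_assoc, ← Matrix.mul_assoc, hQ, Matrix.one_mul]
  rw [aeval_mul, aeval_X, Matrix.mul_assoc, mul_aeval_eq_aeval_mul_of_mul_eq hint, hp,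
    Matrix.zero_mul, Matrix.mul_zero]

theorem ncard_spectrum_transpose_mul_mul_le {K : Type*} [Field K] {Q : Matrix m n K}
    (hQ : Q * Qᵀ = 1) {B : Matrix m m K} {p : K[X]} (hp : p ≠ 0) (hB : aeval B p = 0) :
    (spectrum K (Qᵀ * B * Q)).ncard ≤ p.natDegree + 1 :=
  natDegree_X_mul hp ▸ spectrum.ncard_le_natDegree_of_aeval_eq_zero (mul_ne_zero X_ne_zero hp)
    (aeval_transpose_mul_mul_X_mul_eq_zero hQ hB)

end Matrix

section FiberIndicator

variable {ι κ : Type*} [Fintype κ] [DecidableEq ι]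

noncomputable def fiberScale (π : κ → ι) (a : ι) : ℝ :=
  (Real.sqrt ((Finset.univ.filter fun i => π i = a).card : ℝ))⁻¹

noncomputable def fiberIndicator (π : κ → ι) : Matrix ι κ ℝ :=
  Matrix.of fun a i => if π i = a then fiberScale π a else 0

theorem fiberScale_ne_zero (π : κ → ι) (i : κ) : fiberScale π (π i) ≠ 0 := by
  have hcard : (Finset.univ.filter fun j => π j = π i).card ≠ 0 :=
    Finset.card_ne_zero.mpr ⟨i, by simp⟩
  simp [fiberScale, hcard]

theorem fiberIndicator_mul_transpose [Fintype ι] {π : κ → ι} (hπ : Function.Surjective π) :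
    fiberIndicator π * (fiberIndicator π)ᵀ = 1 := by
  ext a b
  by_cases hab : a = b
  · subst hab
    obtain ⟨i, rfl⟩ := hπ a
    have hcard : (0 : ℝ) < (Finset.univ.filter fun j => π j = π i).card := by
      exact_mod_cast Finset.card_pos.mpr ⟨i, by simp⟩
    simp [fiberIndicator, fiberScale, Matrix.mul_apply, Finset.sum_ite, Finset.filter_filter,
      ← mul_inv, Real.mul_self_sqrt hcard.le, hcard.ne']
  · simp only [fiberIndicator, Matrix.mul_apply, Matrix.transpose_apply, Matrix.of_apply,
      Matrix.one_apply_ne hab]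
    refine Finset.sum_eq_zero fun j _ => ?_
    split_ifs with ha hb
    · exact absurd (ha.symm.trans hb) hab
    all_goals simp

theorem transpose_fiberIndicator_mul_mul_apply [Fintype ι] (π : κ → ι) (B : Matrix ι ι ℝ)
    (i j : κ) :
    ((fiberIndicator π)ᵀ * B * fiberIndicator π) i j =
      fiberScale π (π i) * B (π i) (π j) * fiberScale π (π j) := by
  simp [fiberIndicator, Matrix.mul_apply]

end FiberIndicator

theorem transpose_fiberIndicator_mul_mul_mem_SMat {ι : Type*} [Fintype ι] [DecidableEq ι]
    [LinearOrder ι] {L : List Bool} {π : Fin L.length → ι} (hπ : Monotone π) {c : ι → Bool}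
    (hL : ∀ i, L.get i = c (π i)) {B : Matrix ι ι ℝ} (hB : B.IsSymm)
    (hBc : ∀ a b, a ≤ b → (B a b ≠ 0 ↔ c b = true)) :
    (fiberIndicator π)ᵀ * B * fiberIndicator π ∈ SMat (thresholdOfList L) := by
  refine ⟨by simp [Matrix.IsSymm, Matrix.transpose_mul, hB.eq, Matrix.mul_assoc],
    fun i j hij => ?_⟩
  have hlt : ∀ i j, i < j → (B (π i) (π j) ≠ 0 ↔ L.get j = true) := fun i j h => by
    rw [hBc _ _ (hπ h.le), hL]
  rw [transpose_fiberIndicator_mul_mul_apply, mul_ne_zero_iff, mul_ne_zero_iff,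
    and_iff_right (fiberScale_ne_zero π i), and_iff_left (fiberScale_ne_zero π j)]
  rcases hij.lt_or_gt with h | h
  · simp [thresholdOfList, hlt i j h, h, hij, h.not_gt]
  · rw [← hB.apply]
    simp [thresholdOfList, hlt j i h, h, hij, h.not_gt]

def blockBit : Fin 4 → Bool := ![false, true, false, true]

def blockIndex (k₁ t₁ k₂ v : ℕ) : Fin 4 :=
  if v < k₁ then 0 else if v < k₁ + t₁ then 1 else if v < k₁ + t₁ + k₂ then 2 else 3

theorem blockIndex_mono (k₁ t₁ k₂ : ℕ) : Monotone (blockIndex k₁ t₁ k₂) := by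
  intro v w hvw
  unfold blockIndex
  split_ifs <;> first | decide | omega

theorem blockIndex_surjective {k₁ t₁ k₂ n : ℕ} (hk₁ : 1 ≤ k₁) (ht₁ : 1 ≤ t₁) (hk₂ : 1 ≤ k₂)
    (hn : k₁ + t₁ + k₂ < n) : Function.Surjective fun v : Fin n => blockIndex k₁ t₁ k₂ v := by
  intro a
  fin_cases a
  · exact ⟨⟨0, by omega⟩, by simp [blockIndex]; omega⟩
  · exact ⟨⟨k₁, by omega⟩, by simp [blockIndex]; omega⟩
  · exact ⟨⟨k₁ + t₁, by omega⟩, by simp [blockIndex]; omega⟩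
  · exact ⟨⟨k₁ + t₁ + k₂, by omega⟩, by simp [blockIndex]; omega⟩

theorem getElem_replicate_blocks (k₁ t₁ k₂ t₂ v : ℕ)
    (hv : v < (List.replicate k₁ false ++ List.replicate t₁ true ++
      List.replicate k₂ false ++ List.replicate t₂ true).length) :
    (List.replicate k₁ false ++ List.replicate t₁ true ++
      List.replicate k₂ false ++ List.replicate t₂ true)[v] = blockBit (blockIndex k₁ t₁ k₂ v) := by
  simp only [List.getElem_append, List.getElem_replicate, List.length_append,
    List.length_replicate]
  unfold blockIndex
  split_ifs <;> first | rfl | omega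

/-- `vvᵀ + wwᵀ - 2` for the orthogonal vectors `v = (-1,-2,1,4)`, `w = (1,2,1,1)` with
`‖v‖² = 22`, `‖w‖² = 7`; hence its eigenvalues are `-2, 5, 20`. -/
def witness : Matrix (Fin 4) (Fin 4) ℝ :=
  !![0, 4, 0, -3; 4, 6, 0, -6; 0, 0, 0, 5; -3, -6, 5, 15]

theorem witness_isSymm : witness.IsSymm := by
  ext a b
  fin_cases a <;> fin_cases b <;> rfl

theorem witness_ne_zero_iff {a b : Fin 4} (hab : a ≤ b) :
    witness a b ≠ 0 ↔ blockBit b = true := by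
  fin_cases a <;> fin_cases b <;> simp_all [witness, blockBit]

theorem aeval_witness : aeval witness ((X + 2) * (X - 5) * (X - 20) : ℝ[X]) = 0 := by
  simp only [map_mul, map_add, map_sub, aeval_X, map_ofNat]
  ext i j
  fin_cases i <;> fin_cases j <;>
    simp [witness, Matrix.mul_apply, Fin.sum_univ_four, Matrix.ofNat_apply] <;> norm_num

theorem ncard_spectrum_transpose_mul_witness_mul_le {n : Type*} [Fintype n] [DecidableEq n]
    {Q : Matrix (Fin 4) n ℝ} (hQ : Q * Qᵀ = 1) : (spectrum ℝ (Qᵀ * witness * Q)).ncard ≤ 4 := by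
  have hdeg : ((X + 2) * (X - 5) * (X - 20) : ℝ[X]).natDegree = 3 := by compute_degree!
  have hp : ((X + 2) * (X - 5) * (X - 20) : ℝ[X]) ≠ 0 := by
    intro h
    simp [h] at hdeg
  simpa [hdeg] using Matrix.ncard_spectrum_transpose_mul_mul_le hQ hp aeval_witness

/-- For `G ≅ (0^{k_1}, 1^{t_1}, 0^{k_2}, 1^{t_2})` with
`k_1, k_2, t_1, t_2 ≥ 1`, `q(G) ≤ 4`. -/
theorem stmt9 (k₁ t₁ k₂ t₂ : ℕ) (hk₁ : 1 ≤ k₁) (ht₁ : 1 ≤ t₁) (hk₂ : 1 ≤ k₂) (ht₂ : 1 ≤ t₂) :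
    qGraph (thresholdOfList (List.replicate k₁ false ++ List.replicate t₁ true ++
      List.replicate k₂ false ++ List.replicate t₂ true)) ≤ 4 := by
  set L := List.replicate k₁ false ++ List.replicate t₁ true ++
    List.replicate k₂ false ++ List.replicate t₂ true
  have hlen : k₁ + t₁ + k₂ < L.length := by
    simp only [L, List.length_append, List.length_replicate]
    omega
  set π : Fin L.length → Fin 4 := fun v => blockIndex k₁ t₁ k₂ v
  have hA : (fiberIndicator π)ᵀ * witness * fiberIndicator π ∈ SMat (thresholdOfList L) :=
    transpose_fiberIndicator_mul_mul_mem_SMat (fun _ _ h => blockIndex_mono k₁ t₁ k₂ h)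
      (fun v => getElem_replicate_blocks k₁ t₁ k₂ t₂ v v.isLt) witness_isSymm
      (fun _ _ => witness_ne_zero_iff)
  have hQ : fiberIndicator π * (fiberIndicator π)ᵀ = 1 :=
    fiberIndicator_mul_transpose (blockIndex_surjective hk₁ ht₁ hk₂ hlen)
  exact (Nat.sInf_le (Set.mem_image_of_mem numEig hA)).trans (ncard_spectrum_transpose_mul_witness_mul_le hQ)
end
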